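/- Let C ≥ 1 and let a, b, h > 0 satisfy 1 ≤ b/a ≤ C and h/b ≥ C. With D(x) = (1 - x/h)·a + (x/h)·b and v(x,y) = a·y/D(x) defined on the trapezoid Q = {(x,y) : 0 ≤ x ≤ h, 0 ≤ y ≤ D(x)}, there exists a constant M depending only on C such that ∬_Q |∇v|² dx dy ≤ M · h · a. -/

import Mathlib

/-! On the trapezoid, `a ≤ D ≤ b` and `0 ≤ y ≤ D`, so `∂ᵧv = a / D ∈ (0, 1]` and
`|∂ₓv| = (a y / D²) · (b - a) / h ≤ 1` because `h ≥ C b ≥ b`. Hence `|∇v|² ≤ 2` on `Q`, and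
`Q ⊆ [0, h] × [0, b]` has area at most `h b ≤ C h a`, which gives `M = 2 C`. -/

open MeasureTheory Set

/-- The paper's `D(x)`, the upper boundary of the trapezoid `Q`. -/
noncomputable def trapezoidTop (a b h x : ℝ) : ℝ := (1 - x / h) * a + x / h * b

section TrapezoidTop

variable {a b h x y : ℝ}

lemma trapezoidTop_mem_Icc (hab : a ≤ b) (hx : x ∈ Icc 0 h) :
    trapezoidTop a b h x ∈ Icc a b := by
  have ht₀ : 0 ≤ x / h := div_nonneg hx.1 (hx.1.trans hx.2)
  have ht₁ : x / h ≤ 1 := div_le_one_of_le₀ hx.2 (hx.1.trans hx.2)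
  constructor <;> unfold trapezoidTop <;> nlinarith

lemma hasDerivAt_trapezoidTop : HasDerivAt (trapezoidTop a b h) ((b - a) / h) x := by
  have : trapezoidTop a b h = fun x => a + x * ((b - a) / h) := by
    funext x; unfold trapezoidTop; ring
  simpa [this] using ((hasDerivAt_id x).mul_const ((b - a) / h)).const_add a

lemma sq_deriv_stretch_fst_le_one (ha : 0 < a) (hab : a ≤ b) (hbh : b ≤ h) (hx : x ∈ Icc 0 h)
    (hy : y ∈ Icc 0 (trapezoidTop a b h x)) :
    deriv (fun x' => a * y / trapezoidTop a b h x') x ^ 2 ≤ 1 := by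
  set W := trapezoidTop a b h x
  have hW : a ≤ W := (trapezoidTop_mem_Icc hab hx).1
  have hW₀ : 0 < W := ha.trans_le hW
  have hderiv : deriv (fun x' => a * y / trapezoidTop a b h x') x
      = -(a * y / W ^ 2 * ((b - a) / h)) := by
    have hd : HasDerivAt (fun x' => a * y / trapezoidTop a b h x')
        ((0 * W - a * y * ((b - a) / h)) / W ^ 2) x :=
      (hasDerivAt_const x (a * y)).div hasDerivAt_trapezoidTop hW₀.ne'
    rw [hd.deriv]
    ring
  have hfrac : a * y / W ^ 2 ≤ 1 :=
    div_le_one_of_le₀ (by nlinarith [hy.1, hy.2]) (sq_nonneg W)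
  have hslope₀ : 0 ≤ (b - a) / h := div_nonneg (by linarith) (by linarith)
  have hslope : (b - a) / h ≤ 1 := div_le_one_of_le₀ (by linarith) (by linarith)
  rw [hderiv, sq_le_one_iff_abs_le_one, abs_neg,
    abs_of_nonneg (mul_nonneg (div_nonneg (by nlinarith [hy.1]) (sq_nonneg W)) hslope₀)]
  exact mul_le_one₀ hfrac hslope₀ hslope

lemma sq_deriv_stretch_snd_le_one (ha : 0 < a) (hab : a ≤ b) (hx : x ∈ Icc 0 h) :
    deriv (fun y' => a * y' / trapezoidTop a b h x) y ^ 2 ≤ 1 := by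
  have hW : a ≤ trapezoidTop a b h x := (trapezoidTop_mem_Icc hab hx).1
  have hd : HasDerivAt (fun y' => a * y' / trapezoidTop a b h x)
      (a * 1 / trapezoidTop a b h x) y :=
    ((hasDerivAt_id y).const_mul a).div_const _
  rw [hd.deriv, mul_one, div_pow]
  exact div_le_one_of_le₀ (pow_le_pow_left₀ ha.le hW 2) (sq_nonneg _)

end TrapezoidTop

lemma volume_real_le_of_subset_Icc_prod {s : Set (ℝ × ℝ)} {l w : ℝ} (hl : 0 ≤ l) (hw : 0 ≤ w)
    (hs : s ⊆ Icc 0 l ×ˢ Icc 0 w) : volume.real s ≤ l * w := by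
  have hbox : volume (Icc (0 : ℝ) l ×ˢ Icc (0 : ℝ) w) ≠ ⊤ := by
    rw [Measure.volume_eq_prod, Measure.prod_prod]
    exact ENNReal.mul_ne_top measure_Icc_lt_top.ne measure_Icc_lt_top.ne
  calc volume.real s ≤ volume.real (Icc (0 : ℝ) l ×ˢ Icc (0 : ℝ) w) := measureReal_mono hs hbox
    _ = l * w := by
      rw [Measure.volume_eq_prod, measureReal_prod_prod, Real.volume_real_Icc_of_le hl,
        Real.volume_real_Icc_of_le hw, sub_zero, sub_zero]

theorem stmt_7_general (C : ℝ) :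
    ∃ M : ℝ, ∀ a b h : ℝ, 0 < a → 0 < b → 0 < h →
      1 ≤ b / a → b / a ≤ C → C ≤ h / b →
      ∀ D : ℝ → ℝ, (∀ x, D x = (1 - x / h) * a + (x / h) * b) →
      ∀ v : ℝ → ℝ → ℝ, (∀ x y, v x y = a * y / D x) →
        (∫ p in {p : ℝ × ℝ | p.1 ∈ Set.Icc (0:ℝ) h ∧ p.2 ∈ Set.Icc (0:ℝ) (D p.1)},
            ((deriv (fun x' => v x' p.2) p.1) ^ 2 +
              (deriv (fun y' => v p.1 y') p.2) ^ 2)) ≤ M * h * a := by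
  refine ⟨2 * C, fun a b h ha hb hh hba₁ hbaC hChb D hD v hv => ?_⟩
  have hab : a ≤ b := (one_le_div ha).mp hba₁
  have hbCa : b ≤ C * a := (div_le_iff₀ ha).mp hbaC
  have hbh : b ≤ h := by
    have := (le_div_iff₀ hb).mp hChb
    nlinarith [hba₁.trans hbaC]
  obtain rfl : D = trapezoidTop a b h := funext hD
  obtain rfl : v = fun x y => a * y / trapezoidTop a b h x := funext₂ hv
  set Q := {p : ℝ × ℝ | p.1 ∈ Icc 0 h ∧ p.2 ∈ Icc 0 (trapezoidTop a b h p.1)}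
  have hQ : Q ⊆ Icc 0 h ×ˢ Icc 0 b := fun p ⟨hx, hy⟩ =>
    ⟨hx, hy.1, hy.2.trans (trapezoidTop_mem_Icc hab hx).2⟩
  have hQ_finite : volume Q < ⊤ :=
    (measure_mono hQ).trans_lt (IsCompact.measure_lt_top (isCompact_Icc.prod isCompact_Icc))
  calc _ ≤ ‖∫ p in Q, (deriv (fun x' => a * p.2 / trapezoidTop a b h x') p.1 ^ 2 +
          deriv (fun y' => a * y' / trapezoidTop a b h p.1) p.2 ^ 2)‖ := le_abs_self _
    _ ≤ 2 * volume.real Q := by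
      refine norm_setIntegral_le_of_norm_le_const hQ_finite fun p ⟨hx, hy⟩ => ?_
      rw [Real.norm_of_nonneg (by positivity)]
      exact (add_le_add (sq_deriv_stretch_fst_le_one ha hab hbh hx hy)
        (sq_deriv_stretch_snd_le_one ha hab hx)).trans_eq one_add_one_eq_two
    _ ≤ 2 * (h * b) := by gcongr; exact volume_real_le_of_subset_Icc_prod hh.le hb.le hQ
    _ ≤ 2 * C * h * a := by nlinarith

theorem stmt_7 (C : ℝ) (hC : 1 ≤ C) :
    ∃ M : ℝ, ∀ a b h : ℝ, 0 < a → 0 < b → 0 < h →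
      1 ≤ b / a → b / a ≤ C → C ≤ h / b →
      ∀ D : ℝ → ℝ, (∀ x, D x = (1 - x / h) * a + (x / h) * b) →
      ∀ v : ℝ → ℝ → ℝ, (∀ x y, v x y = a * y / D x) →
        (∫ p in {p : ℝ × ℝ | p.1 ∈ Set.Icc (0:ℝ) h ∧ p.2 ∈ Set.Icc (0:ℝ) (D p.1)},
            ((deriv (fun x' => v x' p.2) p.1) ^ 2 +
              (deriv (fun y' => v p.1 y') p.2) ^ 2)) ≤ M * h * a :=
  stmt_7_general C
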